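/- arXiv:2008.00043 — 2 statements merged into one kernel-verified Lean document; each statement's English description precedes it below -/
import Mathlib

section
/- Let Δ be a simplicial complex on [n], let a ∈ ℝ^Δ̄, a₀ ∈ ℝ, and I ⊆ [n]. Define the switched functional a^(I) by a^(I)_F = (−1)^(#(I ∩ F)) a_F. Then the inequality a·x ≤ a₀ holds for all x ∈ GCut(Δ) if and only if the switched inequality a^(I)·x ≤ a₀ − a·d^I holds for all x ∈ GCut(Δ). Moreover, for every S ⊆ [n], a·d^S = a₀ if and only if a^(I)·d^(S △ I) = a₀ − a·d^I. -/
open Finset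
open scoped symmDiff

/-- The index type of the nonempty faces of a simplicial complex `Δ` on `[n]`. -/
abbrev FaceIdx {n : ℕ} (Δ : Finset (Finset (Fin n))) : Type :=
  {F : Finset (Fin n) // F ∈ Δ ∧ F.Nonempty}

/-- The vertex `d^S` of the generalized cut polytope. -/
noncomputable def dvec {n : ℕ} (Δ : Finset (Finset (Fin n))) (S : Finset (Fin n)) :
    FaceIdx Δ → ℝ :=
  fun F => if Odd ((F.val ∩ S).card) then 1 else 0

lemma odd_card_symmDiff {α : Type*} [DecidableEq α] (A B : Finset α) :
    Odd ((A ∆ B).card) ↔ (Odd A.card ↔ ¬ Odd B.card) := by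
  have h1 : (A \ B).card + (A ∩ B).card = A.card := card_sdiff_add_card_inter A B
  have h2 : (B \ A).card + (B ∩ A).card = B.card := card_sdiff_add_card_inter B A
  have h3 : (A ∆ B).card = (A \ B).card + (B \ A).card := by
    rw [symmDiff_def]
    exact card_union_of_disjoint (disjoint_sdiff_sdiff)
  have h4 : (A ∩ B).card = (B ∩ A).card := by rw [inter_comm]
  simp only [Nat.odd_iff] at *
  omega

lemma key_term {n : ℕ} (F S I : Finset (Fin n)) :
    ((-1:ℝ)^((I ∩ F).card)) * (if Odd ((F ∩ (S ∆ I)).card) then (1:ℝ) else 0) =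
      (if Odd ((F ∩ S).card) then (1:ℝ) else 0) -
      (if Odd ((F ∩ I).card) then (1:ℝ) else 0) := by
  have hd : F ∩ (S ∆ I) = (F ∩ S) ∆ (F ∩ I) := inf_symmDiff_distrib_left F S I
  rw [hd, inter_comm I F]
  have hp := odd_card_symmDiff (F ∩ S) (F ∩ I)
  by_cases hI : Odd ((F ∩ I).card) <;> by_cases hS : Odd ((F ∩ S).card)
  · simp [hp, hI, hS, Odd.neg_one_pow hI]
  · simp [hp, hI, hS, Odd.neg_one_pow hI]
  · simp [hp, hI, hS, Even.neg_one_pow (Nat.not_odd_iff_even.mp hI)]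
  · simp [hp, hI, hS, Even.neg_one_pow (Nat.not_odd_iff_even.mp hI)]

lemma switch_sum {n : ℕ} (Δ : Finset (Finset (Fin n))) (a : FaceIdx Δ → ℝ)
    (S I : Finset (Fin n)) :
    ∑ F : FaceIdx Δ, ((-1 : ℝ) ^ ((I ∩ F.val).card) * a F) * dvec Δ (S ∆ I) F =
      ∑ F : FaceIdx Δ, a F * dvec Δ S F - ∑ F : FaceIdx Δ, a F * dvec Δ I F := by
  rw [← Finset.sum_sub_distrib]
  refine Finset.sum_congr rfl fun F _ => ?_
  have := key_term F.val S I
  simp only [dvec]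
  linear_combination a F * this

lemma hull_iff {n : ℕ} (Δ : Finset (Finset (Fin n))) (c : FaceIdx Δ → ℝ) (r : ℝ) :
    (∀ x ∈ convexHull ℝ (Set.range (dvec Δ)), ∑ F : FaceIdx Δ, c F * x F ≤ r) ↔
      ∀ S : Finset (Fin n), ∑ F : FaceIdx Δ, c F * dvec Δ S F ≤ r := by
  constructor
  · intro h S
    exact h _ (subset_convexHull ℝ _ ⟨S, rfl⟩)
  · intro h x hx
    have hlin : IsLinearMap ℝ (fun x : FaceIdx Δ → ℝ => ∑ F : FaceIdx Δ, c F * x F) := by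
      constructor
      · intro u v; simp [mul_add, Finset.sum_add_distrib]
      · intro t u
        simp only [smul_eq_mul, Finset.mul_sum]
        exact Finset.sum_congr rfl fun i _ => by simp [Pi.smul_apply, smul_eq_mul]; ring
    have hconv : Convex ℝ {y : FaceIdx Δ → ℝ | (fun x => ∑ F : FaceIdx Δ, c F * x F) y ≤ r} :=
      convex_halfSpace_le hlin r
    have : convexHull ℝ (Set.range (dvec Δ)) ⊆
        {y : FaceIdx Δ → ℝ | (fun x => ∑ F : FaceIdx Δ, c F * x F) y ≤ r} := by
      apply convexHull_min _ hconv
      rintro y ⟨S, rfl⟩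
      exact h S
    exact this hx

/-- the inequality `a·x ≤ a₀` is valid on `GCut(Δ)` iff its switching
`a^(I)·x ≤ a₀ − a·d^I` is valid on `GCut(Δ)`, where `a^(I)_F = (−1)^(#(I ∩ F)) a_F`.
Moreover, `a·d^S = a₀` iff `a^(I)·d^(S △ I) = a₀ − a·d^I`. -/
theorem stmt_5 {n : ℕ} (Δ : Finset (Finset (Fin n)))
    (hΔ : ∀ F ∈ Δ, ∀ G, G ⊆ F → G ∈ Δ)
    (a : FaceIdx Δ → ℝ) (a₀ : ℝ) (I : Finset (Fin n)) :
    ((∀ x ∈ convexHull ℝ (Set.range (dvec Δ)), ∑ F : FaceIdx Δ, a F * x F ≤ a₀) ↔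
      (∀ x ∈ convexHull ℝ (Set.range (dvec Δ)),
        ∑ F : FaceIdx Δ, ((-1 : ℝ) ^ ((I ∩ F.val).card) * a F) * x F ≤
          a₀ - ∑ F : FaceIdx Δ, a F * dvec Δ I F)) ∧
    (∀ S : Finset (Fin n),
      (∑ F : FaceIdx Δ, a F * dvec Δ S F = a₀) ↔
      (∑ F : FaceIdx Δ, ((-1 : ℝ) ^ ((I ∩ F.val).card) * a F) * dvec Δ (S ∆ I) F =
        a₀ - ∑ F : FaceIdx Δ, a F * dvec Δ I F)) := by
  constructor
  · rw [hull_iff, hull_iff]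
    constructor
    · intro h T
      have hT : T = (T ∆ I) ∆ I := (symmDiff_symmDiff_cancel_right I T).symm
      rw [hT, switch_sum]
      linarith [h (T ∆ I)]
    · intro h S
      have := h (S ∆ I)
      rw [switch_sum] at this
      linarith
  · intro S
    rw [switch_sum]
    constructor <;> intro h <;> linarith
end

section
/- Let 1 ≤ k ≤ n and let ℐ = [n] \ [k]. For each T ⊆ ℐ define α^T ∈ ℝ^(2^[n]) (coordinates indexed by subsets A ⊆ [n]) by α^T_A = (−1)^(#A) if A ∩ ℐ = T and α^T_A = 0 otherwise. Then the vectors {α^T : T ⊆ ℐ} form a basis of the kernel of the linear map ℝ^(2^[n]) → ℝ × ℝ^(𝕋̄_n^k) sending t to (Σ_{A ⊆ [n]} t_A, (Σ_{A ⊆ [n]} d^A_F t_A)_{F ∈ 𝕋̄_n^k}). -/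
open Finset

/-- The nonempty faces of the turtle complex `𝕋_n^k`: nonempty subsets of `[n]` omitting
at least one element of `[k]`. -/
abbrev TFace (n k : ℕ) : Type :=
  {F : Finset (Fin n) // F.Nonempty ∧ ∃ i : Fin n, i.val < k ∧ i ∉ F}

/-- The vector `α^T ∈ ℝ^(2^[n])`: `α^T_A = (−1)^#A` if `A ∩ ℐ = T` and `0` otherwise,
where `ℐ = [n] \ [k]`. -/
noncomputable def alphaVec (n k : ℕ) (T : Finset (Fin n)) : Finset (Fin n) → ℝ :=
  fun A => if A.filter (fun i => k ≤ i.val) = T then (-1 : ℝ) ^ A.card else 0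

/-- The linear map `ℝ^(2^[n]) → ℝ × ℝ^(𝕋̄_n^k)`,
`t ↦ (Σ_A t_A, (Σ_A d^A_F t_A)_F)`. -/
noncomputable def turtleMap (n k : ℕ) :
    (Finset (Fin n) → ℝ) →ₗ[ℝ] ℝ × (TFace n k → ℝ) where
  toFun t := (∑ A : Finset (Fin n), t A,
    fun F => ∑ A : Finset (Fin n),
      (if Odd ((F.val ∩ A).card) then (1 : ℝ) else 0) * t A)
  map_add' t s := by
    refine Prod.ext ?_ ?_
    · simp [Finset.sum_add_distrib]
    · funext F
      simp [mul_add, Finset.sum_add_distrib]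
  map_smul' c t := by
    refine Prod.ext ?_ ?_
    · simp [Finset.mul_sum]
    · funext F
      simp [Finset.mul_sum, mul_left_comm]

/-! For `i` among the first `k` points, toggling `i` in `A` flips the sign of `α^T_A` and leaves
`F ∩ A` unchanged for every face `F ∌ i`; pairing `A` with `A ∆ {i}` puts each `α^T` in the kernel.

Conversely, as `(-1)^m = 1 - 2[m odd]`, a kernel vector `t` has vanishing Walsh–Hadamard transform
`∑_B (-1)^#(S ∩ B) t_B` at every `S` missing such an `i`. The transform of `t + t ∘ (· ∆ {i})`
is supported on exactly those `S`, so it vanishes, and Walsh–Hadamard inversion gives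
`t (A ∆ {i}) = -t A`. Hence `t A = ± t (A ∩ ℐ)`, which writes `t` in terms of the `α^T`; these
have disjoint supports and are therefore independent. -/

open scoped symmDiff

section SubsetSigns

variable {α R : Type*} [DecidableEq α]

lemma card_symmDiff_add_two_mul_card_inter (s t : Finset α) :
    #(s ∆ t) + 2 * #(s ∩ t) = #s + #t := by
  have hle : #(s ∩ t) ≤ #(s ∪ t) := card_le_card inter_subset_union
  rw [symmDiff_eq_sup_sdiff_inf, sup_eq_union, inf_eq_inter,
    card_sdiff_of_subset inter_subset_union, ← card_union_add_card_inter s t]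
  omega

lemma neg_one_pow_card_symmDiff [Monoid R] [HasDistribNeg R] (s t : Finset α) :
    (-1 : R) ^ #(s ∆ t) = (-1) ^ #s * (-1) ^ #t := by
  rw [← pow_add, ← card_symmDiff_add_two_mul_card_inter, pow_add, pow_mul, neg_one_sq, one_pow,
    mul_one]

lemma neg_one_pow_card_symmDiff_singleton [Monoid R] [HasDistribNeg R] (s : Finset α) (i : α) :
    (-1 : R) ^ #(s ∆ {i}) = -(-1) ^ #s := by
  rw [neg_one_pow_card_symmDiff, card_singleton, pow_one, mul_neg_one]

lemma neg_one_pow_card_inter_symmDiff [Monoid R] [HasDistribNeg R] (s t u : Finset α) :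
    (-1 : R) ^ #(s ∩ t ∆ u) = (-1) ^ #(s ∩ t) * (-1) ^ #(s ∩ u) := by
  rw [show s ∩ t ∆ u = (s ∩ t) ∆ (s ∩ u) from inf_symmDiff_distrib_left s t u,
    neg_one_pow_card_symmDiff]

lemma apply_symmDiff_eq_neg_one_pow_card_mul [Ring R] (u : Finset α → R) {D : Finset α}
    (hu : ∀ i ∈ D, ∀ A, u (A ∆ {i}) = -u A) (A : Finset α) :
    u (A ∆ D) = (-1) ^ #D * u A := by
  induction D using Finset.induction_on with
  | empty => rw [← bot_eq_empty, symmDiff_bot, bot_eq_empty, card_empty, pow_zero, one_mul]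
  | insert a D ha ih =>
    have hins : insert a D = D ∆ {a} := by
      rw [insert_eq, ← symmDiff_eq_union (disjoint_singleton_left.2 ha), symmDiff_comm]
    rw [card_insert_of_notMem ha, hins, ← symmDiff_assoc, hu a (mem_insert_self a D),
      ih fun i hi => hu i (mem_insert_of_mem hi), pow_succ, mul_neg_one, neg_mul]

lemma sum_eq_zero_of_apply_symmDiff_singleton_eq_neg [Fintype α] {M : Type*} [AddCommGroup M]
    [IsAddTorsionFree M] (g : Finset α → M) (i : α) (hg : ∀ A, g (A ∆ {i}) = -g A) :
    ∑ A, g A = 0 := by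
  have h := Equiv.sum_comp ((symmDiff_left_involutive {i}).toPerm _) g
  simp only [Function.Involutive.coe_toPerm, hg, sum_neg_distrib] at h
  exact self_eq_neg.1 h.symm

variable [Fintype α] [CommRing R]

def walsh (u : Finset α → R) (S : Finset α) : R := ∑ B, (-1) ^ #(S ∩ B) * u B

lemma walsh_add (u v : Finset α → R) : walsh (u + v) = walsh u + walsh v := by
  funext S
  simp only [walsh, Pi.add_apply, mul_add, sum_add_distrib]

lemma walsh_zero : walsh (0 : Finset α → R) = 0 := by
  funext S
  simp [walsh]

lemma sum_neg_one_pow_card_inter [IsAddTorsionFree R] (C : Finset α) :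
    ∑ S : Finset α, (-1 : R) ^ #(C ∩ S) = if C = ∅ then 2 ^ Fintype.card α else 0 := by
  split_ifs with hC
  · simp [hC, Fintype.card_finset]
  · obtain ⟨c, hc⟩ := nonempty_iff_ne_empty.2 hC
    refine sum_eq_zero_of_apply_symmDiff_singleton_eq_neg _ c fun S => ?_
    rw [neg_one_pow_card_inter_symmDiff, inter_singleton_of_mem hc, card_singleton, pow_one,
      mul_neg_one]

lemma walsh_walsh [IsAddTorsionFree R] (u : Finset α → R) (A : Finset α) :
    walsh (walsh u) A = 2 ^ Fintype.card α * u A := by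
  calc walsh (walsh u) A = ∑ B, (∑ S, (-1 : R) ^ #((A ∆ B) ∩ S)) * u B := by
        simp only [walsh, mul_sum, sum_mul]
        rw [sum_comm]
        refine sum_congr rfl fun B _ => sum_congr rfl fun S _ => ?_
        rw [inter_comm (A ∆ B), neg_one_pow_card_inter_symmDiff, inter_comm S A, mul_assoc]
    _ = 2 ^ Fintype.card α * u A := by
        simp only [sum_neg_one_pow_card_inter, symmDiff_eq_empty, ite_mul, zero_mul, sum_ite_eq,
          mem_univ, if_true]

lemma eq_zero_of_walsh_eq_zero [IsAddTorsionFree R] {u : Finset α → R} (hu : walsh u = 0) :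
    u = 0 := by
  funext A
  have h := walsh_walsh u A
  rw [hu, walsh_zero, ← Nat.cast_ofNat, ← Nat.cast_pow, ← nsmul_eq_mul] at h
  exact (nsmul_eq_zero_iff.1 h.symm).resolve_right (by positivity)

lemma walsh_comp_symmDiff_singleton (u : Finset α → R) (i : α) (S : Finset α) :
    walsh (fun B => u (B ∆ {i})) S = (-1) ^ #(S ∩ {i}) * walsh u S := by
  simp only [walsh, mul_sum]
  refine (Equiv.sum_comp ((symmDiff_left_involutive {i}).toPerm _) _).symm.trans
    (sum_congr rfl fun B _ => ?_)
  rw [Function.Involutive.coe_toPerm, symmDiff_symmDiff_cancel_right,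
    neg_one_pow_card_inter_symmDiff]
  ring

lemma apply_symmDiff_singleton_eq_neg_of_walsh_eq_zero [IsAddTorsionFree R] (u : Finset α → R) (i : α)
    (hu : ∀ S, i ∉ S → walsh u S = 0) (A : Finset α) : u (A ∆ {i}) = -u A := by
  have hv : walsh (u + fun B => u (B ∆ {i})) = 0 := by
    funext S
    rw [walsh_add, Pi.add_apply, walsh_comp_symmDiff_singleton]
    by_cases hi : i ∈ S
    · rw [inter_singleton_of_mem hi, card_singleton, pow_one, neg_one_mul, add_neg_cancel,
        Pi.zero_apply]
    · rw [hu S hi, mul_zero, add_zero, Pi.zero_apply]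
  exact eq_neg_of_add_eq_zero_right (congrFun (eq_zero_of_walsh_eq_zero hv) A)

end SubsetSigns

section Turtle

variable {n k : ℕ}

lemma turtleMap_fst (t : Finset (Fin n) → ℝ) : (turtleMap n k t).1 = ∑ A, t A := rfl

lemma turtleMap_snd (t : Finset (Fin n) → ℝ) (F : TFace n k) :
    (turtleMap n k t).2 F = ∑ A, (if Odd #(F.val ∩ A) then 1 else 0) * t A := rfl

lemma alphaVec_symmDiff_singleton (T : Finset (Fin n)) {i : Fin n} (hi : i.val < k)
    (A : Finset (Fin n)) : alphaVec n k T (A ∆ {i}) = -alphaVec n k T A := by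
  have hfilter : (A ∆ {i}).filter (fun j => k ≤ j.val) = A.filter (fun j => k ≤ j.val) := by
    ext j
    by_cases hj : j = i
    · subst hj
      simp [hi]
    · simp [mem_symmDiff, hj]
  simp only [alphaVec, hfilter, neg_one_pow_card_symmDiff_singleton]
  split_ifs <;> simp

lemma turtleMap_alphaVec (hk : 1 ≤ k) (hkn : k ≤ n) (T : Finset (Fin n)) :
    turtleMap n k (alphaVec n k T) = 0 := by
  refine Prod.ext ?_ (funext fun F => ?_)
  · rw [turtleMap_fst]
    exact sum_eq_zero_of_apply_symmDiff_singleton_eq_neg _ ⟨0, by omega⟩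
      (alphaVec_symmDiff_singleton T hk)
  · obtain ⟨-, i, hik, hiF⟩ := F.property
    rw [turtleMap_snd]
    refine sum_eq_zero_of_apply_symmDiff_singleton_eq_neg _ i fun A => ?_
    have hFA : F.val ∩ A ∆ {i} = F.val ∩ A := by
      rw [show F.val ∩ A ∆ {i} = (F.val ∩ A) ∆ (F.val ∩ {i}) from inf_symmDiff_distrib_left _ _ _,
        inter_singleton_of_notMem hiF, ← bot_eq_empty, symmDiff_bot]
    rw [alphaVec_symmDiff_singleton T hik, hFA, mul_neg]

lemma walsh_eq_zero_of_turtleMap_eq_zero {t : Finset (Fin n) → ℝ} (ht : turtleMap n k t = 0)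
    {S : Finset (Fin n)} (hS : ∃ i : Fin n, i.val < k ∧ i ∉ S) : walsh t S = 0 := by
  have hsum : ∑ B, t B = 0 := congrArg Prod.fst ht
  rcases S.eq_empty_or_nonempty with rfl | hne
  · simpa [walsh] using hsum
  have hodd : ∑ B, (if Odd #(S ∩ B) then 1 else 0) * t B = 0 :=
    congrFun (congrArg Prod.snd ht) ⟨S, hne, hS⟩
  calc walsh t S = ∑ B, t B - 2 * ∑ B, (if Odd #(S ∩ B) then 1 else 0) * t B := by
        simp only [walsh, mul_sum, ← sum_sub_distrib]
        refine sum_congr rfl fun B _ => ?_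
        rcases Nat.even_or_odd #(S ∩ B) with h | h
        · simp [h.neg_one_pow, Nat.not_odd_iff_even.2 h]
        · simp only [h.neg_one_pow, h, if_true]
          ring
    _ = 0 := by rw [hsum, hodd, mul_zero, sub_zero]

lemma apply_eq_of_turtleMap_eq_zero {t : Finset (Fin n) → ℝ} (ht : turtleMap n k t = 0)
    (A : Finset (Fin n)) :
    t A = (-1) ^ #(A.filter fun j => ¬k ≤ j.val) * t (A.filter fun j => k ≤ j.val) := by
  have hflip {i : Fin n} (hi : i.val < k) (B : Finset (Fin n)) : t (B ∆ {i}) = -t B :=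
    apply_symmDiff_singleton_eq_neg_of_walsh_eq_zero t i
      (fun S hS => walsh_eq_zero_of_turtleMap_eq_zero ht ⟨i, hi, hS⟩) B
  conv_lhs => rw [← filter_union_filter_not_eq (fun j => k ≤ j.val) A,
    ← symmDiff_eq_union (disjoint_filter_filter_not A A _)]
  exact apply_symmDiff_eq_neg_one_pow_card_mul t (fun i hi => hflip (not_le.1 (mem_filter.1 hi).2)) _

lemma sum_smul_alphaVec_apply (c : {T : Finset (Fin n) // ∀ i ∈ T, k ≤ i.val} → ℝ)
    {A : Finset (Fin n)} {T : {T : Finset (Fin n) // ∀ i ∈ T, k ≤ i.val}}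
    (hA : A.filter (fun j => k ≤ j.val) = T.val) :
    (∑ T', c T' • alphaVec n k T'.val) A = c T * (-1) ^ #A := by
  rw [Finset.sum_apply, sum_eq_single T]
  · simp [alphaVec, hA]
  · intro T' _ hT'
    rw [Pi.smul_apply, alphaVec, hA, if_neg fun h => hT' (Subtype.ext h.symm), smul_zero]
  · simp

end Turtle

/-- the vectors `α^T`, for `T ⊆ ℐ = [n] \ [k]`, form a basis of the kernel
of the map `t ↦ (Σ_A t_A, (Σ_A d^A_F t_A)_{F ∈ 𝕋̄_n^k})`. -/
theorem stmt_9 (n k : ℕ) (hk : 1 ≤ k) (hkn : k ≤ n) :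
    LinearIndependent ℝ
      (fun T : {T : Finset (Fin n) // ∀ i ∈ T, k ≤ i.val} => alphaVec n k T.val) ∧
    Submodule.span ℝ
        (Set.range (fun T : {T : Finset (Fin n) // ∀ i ∈ T, k ≤ i.val} =>
          alphaVec n k T.val)) =
      LinearMap.ker (turtleMap n k) := by
  refine ⟨Fintype.linearIndependent_iff.2 fun c hc T => ?_, le_antisymm ?_ fun t ht => ?_⟩
  · have h := congrFun hc T.val
    rw [sum_smul_alphaVec_apply c (filter_true_of_mem T.2)] at h
    simpa using h
  · rw [Submodule.span_le, Set.range_subset_iff]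
    exact fun T => turtleMap_alphaVec hk hkn T.val
  · rw [Submodule.mem_span_range_iff_exists_fun]
    refine ⟨fun T => (-1) ^ #T.val * t T.val, funext fun A => ?_⟩
    have hsq : ((-1 : ℝ) ^ #(A.filter fun j => k ≤ j.val)) ^ 2 = 1 := by
      rw [← pow_mul, pow_mul', neg_one_sq, one_pow]
    rw [sum_smul_alphaVec_apply _ (T := ⟨_, fun j hj => (mem_filter.1 hj).2⟩) rfl,
      apply_eq_of_turtleMap_eq_zero ht A,
      ← card_filter_add_card_filter_not (s := A) (fun j => k ≤ j.val), pow_add]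
    linear_combination (t (A.filter fun j => k ≤ j.val) *
      (-1) ^ #(A.filter fun j => ¬k ≤ j.val)) * hsq
end
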